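/- Let S ∈ O(n) be an orthogonal matrix and τ > 0. Let P, Q, R : [0,τ] → ℝ^{n×n} be C¹ matrix functions with P(t), R(t) symmetric and R(t) positive definite for all t ∈ [0,τ]; set A = −R⁻¹Q, B = R⁻¹, C = P − QᵀR⁻¹Q. Suppose there exists a C¹ symmetric solution W : [0,τ] → ℝ^{n×n} of the Riccati differential equation Ẇ − C + WA + AᵀW + WBW = 0 on [0,τ] such that Sᵀ W(τ) S − W(0) is positive definite (condition (SR*)). Then the quadratic functional Q(v) = ∫₀^τ ( v·Pv + 2 v̇·Qv + v̇·Rv̇ ) dt is strictly positive for every nonzero C¹ curve v : [0,τ] → ℝⁿ satisfying the symmetric boundary condition v(τ) = S v(0). -/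

import Mathlib

open Matrix Set intervalIntegral

/-!
Completing the square along a symmetric solution `W` of the Riccati equation turns the integrand
into `d/dt (v·Wv) + z·Rz` with `z = v̇ + R⁻¹(Q - W)v`, so
`Q(v) = v(τ)·W(τ)v(τ) - v(0)·W(0)v(0) + ∫ z·Rz`. Under `v(τ) = S v(0)` the boundary term is
`v(0)·(SᵀW(τ)S - W(0))v(0)`, which is positive unless `v(0) = 0`, while `∫ z·Rz ≥ 0` since `R > 0`.
If `v(0) = 0`, the integral is positive: otherwise `z ≡ 0`, so `v` solves the linear equation
`v̇ = -R⁻¹(Q - W)v` with `v(0) = 0`, and Grönwall's inequality forces `v ≡ 0`.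
-/

variable {ι : Type*} [Fintype ι]

theorem mulVec_dotProduct_mulVec_mulVec {κ K : Type*} [Fintype κ] [CommSemiring K]
    (S : Matrix ι κ K) (W : Matrix ι ι K) (x : κ → K) :
    S *ᵥ x ⬝ᵥ W *ᵥ (S *ᵥ x) = x ⬝ᵥ (Sᵀ * W * S) *ᵥ x := by
  rw [Matrix.mul_assoc, ← mulVec_mulVec, dotProduct_transpose_mulVec, mulVec_mulVec,
    dotProduct_comm]

@[fun_prop]
theorem ContinuousOn.dotProduct_mulVec {α R : Type*} [TopologicalSpace α] [TopologicalSpace R]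
    [NonUnitalNonAssocSemiring R] [ContinuousAdd R] [ContinuousMul R] {s : Set α}
    {u w : α → ι → R} {M : α → Matrix ι ι R}
    (hu : ContinuousOn u s) (hM : ContinuousOn M s) (hw : ContinuousOn w s) :
    ContinuousOn (fun t => u t ⬝ᵥ M t *ᵥ w t) s :=
  (continuous_fst.dotProduct (continuous_snd.fst.matrix_mulVec continuous_snd.snd)).comp_continuousOn
    (hu.prodMk (hM.prodMk hw))

theorem HasDerivAt.dotProduct_mulVec {𝕜 : Type*} [NontriviallyNormedField 𝕜]
    {u w : 𝕜 → ι → 𝕜} {M : 𝕜 → Matrix ι ι 𝕜} {u' w' : ι → 𝕜} {M' : Matrix ι ι 𝕜} {t : 𝕜}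
    (hu : HasDerivAt u u' t) (hM : ∀ i j, HasDerivAt (fun s => M s i j) (M' i j) t)
    (hw : HasDerivAt w w' t) :
    HasDerivAt (fun s => u s ⬝ᵥ M s *ᵥ w s)
      (u' ⬝ᵥ M t *ᵥ w t + u t ⬝ᵥ M' *ᵥ w t + u t ⬝ᵥ M t *ᵥ w') t := by
  have hu' := hasDerivAt_pi.1 hu
  have hw' := hasDerivAt_pi.1 hw
  have hsum : HasDerivAt (fun s => ∑ i, u s i * ∑ j, M s i j * w s j)
      (∑ i, (u' i * ∑ j, M t i j * w t j + u t i * ∑ j, (M' i j * w t j + M t i j * w' j))) t :=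
    HasDerivAt.fun_sum fun i _ =>
      (hu' i).mul (HasDerivAt.fun_sum fun j _ => (hM i j).mul (hw' j))
  convert hsum using 1
  · simp only [dotProduct, mulVec]
  · simp only [dotProduct, mulVec, Finset.sum_add_distrib, mul_add, add_assoc]

attribute [local instance] Matrix.linftyOpNormedAddCommGroup in
theorem eqOn_zero_of_hasDerivAt_mulVec {a b : ℝ} {M : ℝ → Matrix ι ι ℝ} {v : ℝ → ι → ℝ}
    (hM : ContinuousOn M (Icc a b)) (hv : ∀ t ∈ Icc a b, HasDerivAt v (M t *ᵥ v t) t)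
    (ha : v a = 0) : EqOn v 0 (Icc a b) := by
  obtain ⟨K, hK⟩ := isCompact_Icc.exists_bound_of_continuousOn hM
  refine eq_zero_of_abs_deriv_le_mul_abs_self_of_eq_zero_right (K := K)
    (fun t ht => (hv t ht).continuousAt.continuousWithinAt)
    (fun t ht => (hv t (Ico_subset_Icc_self ht)).hasDerivWithinAt) ha fun t ht => ?_
  calc ‖M t *ᵥ v t‖ ≤ ‖M t‖ * ‖v t‖ := linfty_opNorm_mulVec _ _
    _ ≤ K * ‖v t‖ := by gcongr; exact hK t (Ico_subset_Icc_self ht)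

variable [DecidableEq ι]

theorem ContinuousOn.matrix_inv {α 𝕜 : Type*} [TopologicalSpace α] [NontriviallyNormedField 𝕜]
    {A : α → Matrix ι ι 𝕜} {s : Set α}
    (hA : ContinuousOn A s) (hdet : ∀ t ∈ s, (A t).det ≠ 0) :
    ContinuousOn (fun t => (A t)⁻¹) s :=
  fun t ht => (continuousAt_matrix_inv _ (by
    rw [Ring.inverse_eq_inv']
    exact continuousAt_inv₀ (hdet t ht))).comp_continuousWithinAt (hA t ht)

section Algebra

variable {K : Type*} [CommRing K]

/-- The right-hand side `C - WA - AᵀW - WBW` of the Riccati equation, with `A = -R⁻¹Q`,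
`B = R⁻¹` and `C = P - QᵀR⁻¹Q`. -/
noncomputable def riccatiRHS (P Q R W : Matrix ι ι K) : Matrix ι ι K :=
  P - Qᵀ * R⁻¹ * Q - W * (-R⁻¹ * Q) - (-R⁻¹ * Q)ᵀ * W - W * R⁻¹ * W

theorem riccatiRHS_eq {P Q R W : Matrix ι ι K} (hR : R⁻¹ᵀ = R⁻¹) (hW : Wᵀ = W) :
    riccatiRHS P Q R W = P - (Q - W)ᵀ * R⁻¹ * (Q - W) := by
  simp only [riccatiRHS, transpose_neg, transpose_mul, transpose_sub, hR, hW]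
  noncomm_ring

theorem quadForm_eq_riccatiRHS_add_sq {P Q R W : Matrix ι ι K} (hR : IsUnit R.det)
    (hRs : Rᵀ = R) (hWs : Wᵀ = W) (x y : ι → K) :
    x ⬝ᵥ P *ᵥ x + 2 * (y ⬝ᵥ Q *ᵥ x) + y ⬝ᵥ R *ᵥ y =
      (y ⬝ᵥ W *ᵥ x + x ⬝ᵥ riccatiRHS P Q R W *ᵥ x + x ⬝ᵥ W *ᵥ y) +
        (y + (R⁻¹ * (Q - W)) *ᵥ x) ⬝ᵥ R *ᵥ (y + (R⁻¹ * (Q - W)) *ᵥ x) := by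
  have hRinv : R⁻¹ᵀ = R⁻¹ := by rw [transpose_nonsing_inv, hRs]
  set m := (R⁻¹ * (Q - W)) *ᵥ x
  have hRm : R *ᵥ m = (Q - W) *ᵥ x := by
    rw [mulVec_mulVec, ← Matrix.mul_assoc, mul_nonsing_inv _ hR, Matrix.one_mul]
  have hmm : m ⬝ᵥ (Q - W) *ᵥ x = x ⬝ᵥ ((Q - W)ᵀ * R⁻¹ * (Q - W)) *ᵥ x := by
    rw [← dotProduct_transpose_mulVec, mulVec_mulVec, Matrix.mul_assoc]
  have hmy : m ⬝ᵥ R *ᵥ y = y ⬝ᵥ R *ᵥ m := by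
    rw [← dotProduct_transpose_mulVec, hRs]
  have hxy : x ⬝ᵥ W *ᵥ y = y ⬝ᵥ W *ᵥ x := by
    rw [← dotProduct_transpose_mulVec, hWs]
  rw [riccatiRHS_eq hRinv hWs, mulVec_add, dotProduct_add, add_dotProduct, add_dotProduct, hmy,
    hRm, hmm, hxy, sub_mulVec, dotProduct_sub, sub_mulVec, dotProduct_sub]
  ring

end Algebra

section Integral

variable {a b : ℝ} {P Q R W : ℝ → Matrix ι ι ℝ} {v : ℝ → ι → ℝ}

theorem integral_quadForm_eq_boundary_add_integral_sq (hab : a ≤ b)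
    (hP : ContinuousOn P (Icc a b)) (hQ : ContinuousOn Q (Icc a b))
    (hR : ContinuousOn R (Icc a b)) (hW : ContinuousOn W (Icc a b))
    (hRdet : ∀ t ∈ Icc a b, (R t).det ≠ 0) (hRs : ∀ t ∈ Icc a b, (R t)ᵀ = R t)
    (hWs : ∀ t ∈ Icc a b, (W t)ᵀ = W t)
    (hW' : ∀ t ∈ Icc a b, ∀ i j,
      HasDerivAt (fun s => W s i j) (riccatiRHS (P t) (Q t) (R t) (W t) i j) t)
    (hv : ContDiff ℝ 1 v) :
    ∫ t in a..b, (v t ⬝ᵥ P t *ᵥ v t + 2 * (deriv v t ⬝ᵥ Q t *ᵥ v t)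
        + deriv v t ⬝ᵥ R t *ᵥ deriv v t) =
      v b ⬝ᵥ W b *ᵥ v b - v a ⬝ᵥ W a *ᵥ v a +
        ∫ t in a..b, (deriv v t + ((R t)⁻¹ * (Q t - W t)) *ᵥ v t) ⬝ᵥ
          R t *ᵥ (deriv v t + ((R t)⁻¹ * (Q t - W t)) *ᵥ v t) := by
  have hRinv := hR.matrix_inv hRdet
  have hvc := hv.continuous
  have hv'c := hv.continuous_deriv le_rfl
  have hv' (t : ℝ) : HasDerivAt v (deriv v t) t := (hv.differentiable one_ne_zero t).hasDerivAt
  have hRic : ContinuousOn (fun t => riccatiRHS (P t) (Q t) (R t) (W t)) (Icc a b) := by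
    unfold riccatiRHS; fun_prop
  have hFTC : ∫ t in a..b, (deriv v t ⬝ᵥ W t *ᵥ v t
        + v t ⬝ᵥ riccatiRHS (P t) (Q t) (R t) (W t) *ᵥ v t + v t ⬝ᵥ W t *ᵥ deriv v t) =
      v b ⬝ᵥ W b *ᵥ v b - v a ⬝ᵥ W a *ᵥ v a :=
    integral_eq_sub_of_hasDerivAt
      (fun t ht => (hv' t).dotProduct_mulVec (hW' t (uIcc_of_le hab ▸ ht)) (hv' t))
      (ContinuousOn.intervalIntegrable_of_Icc hab (by fun_prop))
  rw [← hFTC, ← integral_add]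
  · refine integral_congr fun t ht => ?_
    rw [uIcc_of_le hab] at ht
    exact quadForm_eq_riccatiRHS_add_sq (hRdet t ht).isUnit (hRs t ht) (hWs t ht) _ _
  · exact ContinuousOn.intervalIntegrable_of_Icc hab (by fun_prop)
  · exact ContinuousOn.intervalIntegrable_of_Icc hab (by fun_prop)

theorem integral_sq_pos_of_left_eq_zero_of_ne_zero (hab : a < b)
    (hQ : ContinuousOn Q (Icc a b)) (hR : ContinuousOn R (Icc a b))
    (hW : ContinuousOn W (Icc a b)) (hRpos : ∀ t ∈ Icc a b, (R t).PosDef)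
    (hv : ContDiff ℝ 1 v) (ha : v a = 0) (hne : ∃ t ∈ Icc a b, v t ≠ 0) :
    0 < ∫ t in a..b, (deriv v t + ((R t)⁻¹ * (Q t - W t)) *ᵥ v t) ⬝ᵥ
          R t *ᵥ (deriv v t + ((R t)⁻¹ * (Q t - W t)) *ᵥ v t) := by
  have hRinv := hR.matrix_inv fun t ht => (hRpos t ht).det_pos.ne'
  have hvc := hv.continuous
  have hv'c := hv.continuous_deriv le_rfl
  set z := fun t => deriv v t + ((R t)⁻¹ * (Q t - W t)) *ᵥ v t
  obtain ⟨t₀, ht₀, hz₀⟩ : ∃ t ∈ Icc a b, z t ≠ 0 := by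
    by_contra! hz
    obtain ⟨t, ht, hvt⟩ := hne
    refine hvt (eqOn_zero_of_hasDerivAt_mulVec (M := fun t => -((R t)⁻¹ * (Q t - W t)))
      (by fun_prop) (fun s hs => ?_) ha ht)
    rw [neg_mulVec, ← eq_neg_of_add_eq_zero_left (hz s hs)]
    exact (hv.differentiable one_ne_zero s).hasDerivAt
  refine intervalIntegral.integral_pos hab (by fun_prop) (fun t ht => ?_) ⟨t₀, ht₀, ?_⟩
  · simpa only [star_trivial] using
      (hRpos t (Ioc_subset_Icc_self ht)).posSemidef.dotProduct_mulVec_nonneg (z t)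
  · simpa only [star_trivial] using (hRpos t₀ ht₀).dotProduct_mulVec_pos hz₀

end Integral

theorem stmt_14_general (n : ℕ) (τ : ℝ) (hτ : 0 < τ)
    (S : Matrix (Fin n) (Fin n) ℝ)
    (P Q R : ℝ → Matrix (Fin n) (Fin n) ℝ)
    (hPc : ∀ i j, ContDiffOn ℝ 1 (fun t => P t i j) (Icc 0 τ))
    (hQc : ∀ i j, ContDiffOn ℝ 1 (fun t => Q t i j) (Icc 0 τ))
    (hRc : ∀ i j, ContDiffOn ℝ 1 (fun t => R t i j) (Icc 0 τ))
    (hRs : ∀ t ∈ Icc (0:ℝ) τ, (R t).IsSymm)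
    (hL' : ∀ t ∈ Icc (0:ℝ) τ, (R t).PosDef)
    (A B C : ℝ → Matrix (Fin n) (Fin n) ℝ)
    (hA : ∀ t, A t = -(R t)⁻¹ * Q t)
    (hB : ∀ t, B t = (R t)⁻¹)
    (hC : ∀ t, C t = P t - (Q t)ᵀ * (R t)⁻¹ * Q t)
    -- (SR*) condition
    (W : ℝ → Matrix (Fin n) (Fin n) ℝ)
    (hWc : ∀ i j, ContDiffOn ℝ 1 (fun t => W t i j) (Icc 0 τ))
    (hWs : ∀ t ∈ Icc (0:ℝ) τ, (W t).IsSymm)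
    (hW : ∀ t ∈ Icc (0:ℝ) τ, ∀ i j,
      HasDerivAt (fun s => W s i j)
        ((C t - W t * A t - (A t)ᵀ * W t - W t * B t * W t) i j) t)
    (hWbc : (Sᵀ * W τ * S - W 0).PosDef) :
    ∀ v : ℝ → Fin n → ℝ, ContDiff ℝ 1 v → v τ = S.mulVec (v 0) →
      (∃ t ∈ Icc (0:ℝ) τ, v t ≠ 0) →
      0 < ∫ t in (0:ℝ)..τ,
        (v t ⬝ᵥ (P t).mulVec (v t) + 2 * (deriv v t ⬝ᵥ (Q t).mulVec (v t))
          + deriv v t ⬝ᵥ (R t).mulVec (deriv v t)) := by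
  intro v hv hvbc hvne
  have hcont (M : ℝ → Matrix (Fin n) (Fin n) ℝ)
      (hM : ∀ i j, ContDiffOn ℝ 1 (fun t => M t i j) (Icc 0 τ)) : ContinuousOn M (Icc 0 τ) :=
    continuousOn_pi.2 fun i => continuousOn_pi.2 fun j => (hM i j).continuousOn
  have hW' (t) (ht : t ∈ Icc 0 τ) (i j) :
      HasDerivAt (fun s => W s i j) (riccatiRHS (P t) (Q t) (R t) (W t) i j) t := by
    simpa only [riccatiRHS, hA, hB, hC] using hW t ht i j
  rw [integral_quadForm_eq_boundary_add_integral_sq hτ.le (hcont P hPc) (hcont Q hQc)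
    (hcont R hRc) (hcont W hWc) (fun t ht => (hL' t ht).det_pos.ne') (fun t ht => (hRs t ht).eq)
    (fun t ht => (hWs t ht).eq) hW' hv, hvbc, mulVec_dotProduct_mulVec_mulVec, ← dotProduct_sub,
    ← sub_mulVec]
  by_cases hv0 : v 0 = 0
  · rw [hv0, zero_dotProduct, zero_add]
    exact integral_sq_pos_of_left_eq_zero_of_ne_zero hτ (hcont Q hQc) (hcont R hRc) (hcont W hWc) hL'
      hv hv0 hvne
  · have hbdry : 0 < v 0 ⬝ᵥ (Sᵀ * W τ * S - W 0) *ᵥ v 0 := by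
      simpa only [star_trivial] using hWbc.dotProduct_mulVec_pos hv0
    refine add_pos_of_pos_of_nonneg hbdry (intervalIntegral.integral_nonneg hτ.le fun t ht => ?_)
    simpa only [star_trivial] using (hL' t ht).posSemidef.dotProduct_mulVec_nonneg _

/-- Let `S ∈ O(n)` and `τ > 0`. Under the strengthened Legendre
condition (`R(t) > 0` on `[0,τ]`), with `A = −R⁻¹Q`, `B = R⁻¹`, `C = P − QᵀR⁻¹Q`, if
condition (SR*) holds — there is a `C¹` symmetric solution `W` of the Riccati equation on
`[0,τ]` with `SᵀW(τ)S − W(0)` positive definite — then the quadratic functional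
`Q(v) = ∫₀^τ (v·Pv + 2 v̇·Qv + v̇·Rv̇) dt` is strictly positive on every nonzero `C¹`
curve satisfying the symmetric boundary condition `v(τ) = S v(0)`. -/
theorem stmt_14 (n : ℕ) (hn : 0 < n) (τ : ℝ) (hτ : 0 < τ)
    (S : Matrix (Fin n) (Fin n) ℝ) (hS : Sᵀ * S = 1)
    (P Q R : ℝ → Matrix (Fin n) (Fin n) ℝ)
    (hPc : ∀ i j, ContDiffOn ℝ 1 (fun t => P t i j) (Icc 0 τ))
    (hQc : ∀ i j, ContDiffOn ℝ 1 (fun t => Q t i j) (Icc 0 τ))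
    (hRc : ∀ i j, ContDiffOn ℝ 1 (fun t => R t i j) (Icc 0 τ))
    (hPs : ∀ t ∈ Icc (0:ℝ) τ, (P t).IsSymm)
    (hRs : ∀ t ∈ Icc (0:ℝ) τ, (R t).IsSymm)
    (hL' : ∀ t ∈ Icc (0:ℝ) τ, (R t).PosDef)
    (A B C : ℝ → Matrix (Fin n) (Fin n) ℝ)
    (hA : ∀ t, A t = -(R t)⁻¹ * Q t)
    (hB : ∀ t, B t = (R t)⁻¹)
    (hC : ∀ t, C t = P t - (Q t)ᵀ * (R t)⁻¹ * Q t)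
    -- (SR*) condition
    (W : ℝ → Matrix (Fin n) (Fin n) ℝ)
    (hWc : ∀ i j, ContDiffOn ℝ 1 (fun t => W t i j) (Icc 0 τ))
    (hWs : ∀ t ∈ Icc (0:ℝ) τ, (W t).IsSymm)
    (hW : ∀ t ∈ Icc (0:ℝ) τ, ∀ i j,
      HasDerivAt (fun s => W s i j)
        ((C t - W t * A t - (A t)ᵀ * W t - W t * B t * W t) i j) t)
    (hWbc : (Sᵀ * W τ * S - W 0).PosDef) :
    ∀ v : ℝ → Fin n → ℝ, ContDiff ℝ 1 v → v τ = S.mulVec (v 0) →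
      (∃ t ∈ Icc (0:ℝ) τ, v t ≠ 0) →
      0 < ∫ t in (0:ℝ)..τ,
        (v t ⬝ᵥ (P t).mulVec (v t) + 2 * (deriv v t ⬝ᵥ (Q t).mulVec (v t))
          + deriv v t ⬝ᵥ (R t).mulVec (deriv v t)) :=
  stmt_14_general n τ hτ S P Q R hPc hQc hRc hRs hL' A B C hA hB hC W hWc hWs hW hWbc
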